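/- arXiv:2506.19516 — 2 statements merged into one kernel-verified Lean document; each statement's English description precedes it below -/
import Mathlib

section
/- Let β ∈ (0,1) and δ ∈ ℝ. Then for every real number z the series Σ_{n=0}^∞ z^n / (Γ(n+1) Γ(δ − βn)) defining the Wright-type function e^{1,δ}_{1,β}(z) converges absolutely; in particular e^{1,δ}_{1,β} is well defined on all of ℝ. -/
/-! By the reflection formula, `|1 / Γ(δ - βn)| ≤ Γ(1 - δ + βn) / π` as soon as `δ - βn < 1`, so the
series is dominated by `∑ |z|ⁿ Γ(1 - δ + βn) / (π n!)`. Log-convexity of `Γ` gives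
`Γ(y + β) ≤ Γ(y) y^β`, so the ratio of consecutive terms of the dominating series is
`O(n^(β - 1))`, which tends to `0` because `β < 1`. -/

open Set

/-- The Wright-type function `e^{1,δ}_{1,β}(z) = ∑ zⁿ / (Γ(n+1) Γ(δ - βn))`.
(Mathlib's `Real.Gamma` vanishes at the poles `0, -1, -2, …`, so division by it
implements the convention `1/Γ(pole) = 0`.) -/
noncomputable def wrightE (β δ z : ℝ) : ℝ :=
  ∑' n : ℕ, z ^ n / (Real.Gamma ((n : ℝ) + 1) * Real.Gamma (δ - β * n))

open Real Filter Topology Nat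

namespace Real

lemma inv_Gamma_eq_sin_mul_Gamma_one_sub_div {s : ℝ} (hs : s < 1) :
    (Gamma s)⁻¹ = sin (π * s) * Gamma (1 - s) / π := by
  have hΓ : Gamma (1 - s) ≠ 0 := (Gamma_pos_of_pos (by linarith)).ne'
  have hrefl := Gamma_mul_Gamma_one_sub s
  rcases eq_or_ne (Gamma s) 0 with h | h
  · have hsin : sin (π * s) = 0 := by
      simpa [h, pi_ne_zero, eq_comm (a := (0 : ℝ))] using hrefl
    simp [h, hsin]
  · have hsin : sin (π * s) ≠ 0 := fun h0 => mul_ne_zero h hΓ (by simp [hrefl, h0])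
    rw [eq_div_iff hsin] at hrefl
    field_simp
    linear_combination -hrefl

lemma abs_inv_Gamma_le {s : ℝ} (hs : s < 1) : |(Gamma s)⁻¹| ≤ Gamma (1 - s) / π := by
  have hΓ : 0 < Gamma (1 - s) := Gamma_pos_of_pos (by linarith)
  rw [inv_Gamma_eq_sin_mul_Gamma_one_sub_div hs, abs_div, abs_mul, abs_of_pos hΓ,
    abs_of_pos pi_pos]
  gcongr
  exact mul_le_of_le_one_left hΓ.le (abs_sin_le_one _)

lemma Gamma_add_le_mul_rpow {x β : ℝ} (hx : 0 < x) (hβ0 : 0 < β) (hβ1 : β < 1) :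
    Gamma (x + β) ≤ Gamma x * x ^ β := by
  have hΓ := Gamma_pos_of_pos hx
  calc Gamma (x + β) = Gamma ((1 - β) * x + β * (x + 1)) := by ring_nf
    _ ≤ Gamma x ^ (1 - β) * Gamma (x + 1) ^ β :=
      Gamma_mul_add_mul_le_rpow_Gamma_mul_rpow_Gamma hx (by linarith) (by linarith) hβ0
        (by ring)
    _ = Gamma x * x ^ β := by
      rw [Gamma_add_one hx.ne', mul_rpow hx.le hΓ.le, mul_left_comm, ← rpow_add hΓ, sub_add_cancel,
        rpow_one, mul_comm]

end Real

lemma summable_pow_mul_Gamma_div_factorial (x₀ c : ℝ) {β : ℝ} (hβ0 : 0 < β) (hβ1 : β < 1) :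
    Summable fun n : ℕ => c ^ n * Gamma (x₀ + β * n) / n ! := by
  have hn : Tendsto (fun n : ℕ => (n : ℝ)) atTop atTop := tendsto_natCast_atTop_atTop
  have hpos : ∀ᶠ n : ℕ in atTop, 0 < x₀ + β * n :=
    (tendsto_atTop_add_const_left _ x₀ (hn.const_mul_atTop hβ0)).eventually_gt_atTop 0
  have hle : ∀ᶠ n : ℕ in atTop, x₀ + β * n ≤ n + 1 := by
    filter_upwards [(hn.const_mul_atTop (sub_pos.2 hβ1)).eventually_ge_atTop (x₀ - 1)] with n h
    linarith
  have hbig : ∀ᶠ n : ℕ in atTop, 2 * |c| ≤ ((n : ℝ) + 1) ^ (1 - β) :=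
    ((tendsto_rpow_atTop (sub_pos.2 hβ1)).comp
      (tendsto_atTop_add_const_right _ 1 hn)).eventually_ge_atTop _
  refine summable_of_ratio_norm_eventually_le (r := 1 / 2) (by norm_num) ?_
  filter_upwards [hpos, hle, hbig] with n hpos hle hbig
  set y := x₀ + β * n
  have hy : x₀ + β * ↑(n + 1) = y + β := by push_cast; ring
  have hn1 : (0 : ℝ) < n + 1 := by positivity
  have hΓ : 0 < Gamma y := Gamma_pos_of_pos hpos
  have hratio : 2 * |c| * Gamma (y + β) ≤ (n + 1) * Gamma y := by
    calc 2 * |c| * Gamma (y + β) ≤ 2 * |c| * (Gamma y * ((n : ℝ) + 1) ^ β) := by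
          gcongr
          exact (Gamma_add_le_mul_rpow hpos hβ0 hβ1).trans (by gcongr)
      _ ≤ ((n : ℝ) + 1) ^ (1 - β) * ((n : ℝ) + 1) ^ β * Gamma y := by
          rw [mul_left_comm, mul_comm]; gcongr
      _ = (n + 1) * Gamma y := by rw [← rpow_add hn1, sub_add_cancel, rpow_one]
  have hstep : c ^ (n + 1) * Gamma (x₀ + β * ↑(n + 1)) / ↑(n + 1)! =
      c * Gamma (y + β) / ((n + 1) * Gamma y) * (c ^ n * Gamma y / n !) := by
    rw [hy, factorial_succ, pow_succ]
    push_cast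
    field_simp
  rw [hstep, norm_mul]
  gcongr
  rw [Real.norm_eq_abs, abs_div, abs_mul, abs_of_pos (by positivity : 0 < (n + 1) * Gamma y),
    abs_of_pos (Gamma_pos_of_pos (by linarith)), div_le_iff₀ (by positivity)]
  linarith

/-- For `β ∈ (0,1)` and any `δ, z ∈ ℝ`, the series defining `e^{1,δ}_{1,β}(z)`
converges absolutely; in particular the Wright-type function is well defined on ℝ. -/
theorem wrightE_summable_abs (β δ : ℝ) (hβ : β ∈ Ioo (0 : ℝ) 1) (z : ℝ) :
    Summable (fun n : ℕ => |z ^ n / (Real.Gamma ((n : ℝ) + 1) * Real.Gamma (δ - β * n))|) := by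
  obtain ⟨hβ0, hβ1⟩ := hβ
  refine ((summable_pow_mul_Gamma_div_factorial (1 - δ) |z| hβ0 hβ1).div_const π)
    |>.of_norm_bounded_eventually_nat ?_
  have hs : ∀ᶠ n : ℕ in atTop, δ - β * n < 1 :=
    (tendsto_natCast_atTop_atTop.const_mul_atTop hβ0).eventually_gt_atTop (δ - 1)
      |>.mono fun n hn => by linarith
  filter_upwards [hs] with n hs
  rw [norm_abs_eq_norm, Real.norm_eq_abs, div_mul_eq_div_div, div_eq_mul_inv _ (Gamma _),
    abs_mul, abs_div, abs_pow, Gamma_nat_eq_factorial, abs_of_pos (by positivity : (0 : ℝ) < n !)]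
  calc |z| ^ n / n ! * |(Gamma (δ - β * n))⁻¹|
      _ ≤ |z| ^ n / n ! * (Gamma (1 - (δ - β * n)) / π) := by gcongr; exact abs_inv_Gamma_le hs
      _ = |z| ^ n * Gamma (1 - δ + β * n) / n ! / π := by ring_nf
end

section
/- Let α ∈ (0,1), T > 0, and let C > 0 be a constant such that the Green-function estimate |G(x,t,ξ,τ)| ≤ C (t − τ)^{α/2 − 1} holds for all x ∈ [0,1], ξ ∈ (0,1), 0 < τ < t ≤ T. Define K(x,ξ) = (1/Γ(1−α)) ∫_0^T (T − η)^{−α} G(x,η,ξ,0) dη and assume K is continuous on [0,1] × (0,1) and F : [0,1] → ℝ is continuous. Let g : [0,1] × ℝ → ℝ be continuous and satisfy |g(ξ, v₁) − g(ξ, v₂)| ≤ L |v₁ − v₂| for all ξ ∈ [0,1], v₁, v₂ ∈ ℝ, where L ≥ 0 satisfies C L T^{−α/2} Γ(α/2)/Γ(1 − α/2) < 1. Then there exists a unique continuous function v : [0,1] → ℝ such that v(x) = ∫_0^1 K(x,ξ) g(ξ, v(ξ)) dξ + F(x) for all x ∈ [0,1]. -/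
/-!
`G(x,t,ξ,τ)` depends on `t - τ` only, so the estimate on `G`, assumed for `τ > 0`, also holds at
`τ = 0`. It bounds `∫₀ᵀ (T-η)^{-α} |G(x,η,ξ,0)| dη` by `C T^{-α/2} B(α/2, 1-α)`, hence
`|K(x,ξ)| ≤ C T^{-α/2} Γ(α/2)/Γ(1-α/2)`.
Hence `v ↦ ∫₀¹ K(·,ξ) g(ξ,v(ξ)) dξ + F` maps `C[0,1]` into itself and is a contraction for the
sup norm, with constant `C L T^{-α/2} Γ(α/2)/Γ(1-α/2) < 1`; Banach's fixed point theorem gives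
the unique solution.
-/

open Set

/-- `P(x,t) = (t^{α/2-1}/2) e^{1,α/2}_{1,α/2}(-|x| t^{-α/2})`. -/
noncomputable def Pfun (α x t : ℝ) : ℝ :=
  t ^ (α / 2 - 1) / 2 * wrightE (α / 2) (α / 2) (-(|x| * t ^ (-(α / 2))))

/-- The Green function of the Dirichlet problem on `(0,1)` for the subdiffusion
equation: `G(x,t,ξ,τ) = ∑_{m ∈ ℤ} [P(2m+x-ξ, t-τ) - P(2m+x+ξ, t-τ)]`. -/
noncomputable def GreenG (α x t ξ τ : ℝ) : ℝ :=
  ∑' m : ℤ, (Pfun α (2 * (m : ℝ) + x - ξ) (t - τ) - Pfun α (2 * (m : ℝ) + x + ξ) (t - τ))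

open MeasureTheory

/-- The kernel `K(x,ξ) = (1/Γ(1-α)) ∫₀ᵀ (T-η)^{-α} G(x,η,ξ,0) dη`. -/
noncomputable def Kker (α T x ξ : ℝ) : ℝ :=
  (1 / Real.Gamma (1 - α)) * ∫ η in Ioo (0 : ℝ) T, (T - η) ^ (-α) * GreenG α x η ξ 0

theorem intervalIntegrable_rpow_mul_rpow_sub {p q T : ℝ} (hp : -1 < p) (hq : -1 < q)
    (hT : 0 < T) : IntervalIntegrable (fun x => x ^ p * (T - x) ^ q) volume 0 T := by
  have hT2 : 0 < T / 2 := half_pos hT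
  have left : IntervalIntegrable (fun x => x ^ p * (T - x) ^ q) volume 0 (T / 2) := by
    refine (intervalIntegral.intervalIntegrable_rpow' hp).mul_continuousOn ?_
    refine ContinuousOn.rpow_const (by fun_prop) fun x hx => Or.inl ?_
    rw [uIcc_of_le hT2.le] at hx
    linarith [hx.2]
  have right : IntervalIntegrable (fun x => x ^ p * (T - x) ^ q) volume (T / 2) T := by
    have hsub : IntervalIntegrable (fun x => (T - x) ^ q) volume (T / 2) T := by
      simpa [show T - T / 2 = T / 2 by ring] using
        ((intervalIntegral.intervalIntegrable_rpow' hq (a := 0) (b := T / 2)).comp_sub_left T).symm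
    refine hsub.continuousOn_mul (ContinuousOn.rpow_const continuousOn_id fun x hx => Or.inl ?_)
    rw [uIcc_of_le (by linarith)] at hx
    exact (hT2.trans_le hx.1).ne'
  exact left.trans right

theorem integral_Ioo_rpow_mul_rpow_sub {a b T : ℝ} (ha : 0 < a) (hb : 0 < b) (hT : 0 < T) :
    ∫ x in Ioo 0 T, x ^ (a - 1) * (T - x) ^ (b - 1) =
      T ^ (a + b - 1) * ProbabilityTheory.beta a b := by
  have hcpx : ∀ x ∈ Ioo 0 T, ((x ^ (a - 1) * (T - x) ^ (b - 1) : ℝ) : ℂ) =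
      (x : ℂ) ^ ((a : ℂ) - 1) * ((T : ℂ) - x) ^ ((b : ℂ) - 1) := fun x hx => by
    rw [Complex.ofReal_mul, Complex.ofReal_cpow hx.1.le, Complex.ofReal_cpow (sub_pos.2 hx.2).le]
    push_cast; rfl
  have hbeta := Complex.betaIntegral_scaled a b hT
  rw [intervalIntegral.integral_of_le hT.le, integral_Ioc_eq_integral_Ioo,
    ← setIntegral_congr_fun measurableSet_Ioo hcpx, integral_complex_ofReal,
    Complex.betaIntegral_eq_Gamma_mul_div _ _ (by simpa) (by simpa)] at hbeta
  rw [ProbabilityTheory.beta, ← Complex.ofReal_inj, hbeta, Complex.ofReal_mul, Complex.ofReal_cpow hT.le, Complex.ofReal_div, Complex.ofReal_mul,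
    ← Complex.Gamma_ofReal, ← Complex.Gamma_ofReal, ← Complex.Gamma_ofReal]
  push_cast; rfl

theorem abs_integral_rpow_sub_mul_le {a b T C : ℝ} {f : ℝ → ℝ} (ha : 0 < a) (hb : 0 < b)
    (hT : 0 < T) (hf : ∀ x ∈ Ioo 0 T, |f x| ≤ C * x ^ (a - 1)) :
    |∫ x in Ioo 0 T, (T - x) ^ (b - 1) * f x| ≤
      C * (T ^ (a + b - 1) * ProbabilityTheory.beta a b) := by
  have hint : IntegrableOn (fun x => C * (x ^ (a - 1) * (T - x) ^ (b - 1))) (Ioo 0 T) := by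
    refine Integrable.const_mul (IntegrableOn.mono_set ?_ Ioo_subset_Ioc_self) C
    exact (intervalIntegrable_rpow_mul_rpow_sub (by linarith) (by linarith) hT).1
  rw [← integral_Ioo_rpow_mul_rpow_sub ha hb hT, ← integral_const_mul, ← Real.norm_eq_abs]
  refine norm_integral_le_of_norm_le hint ((ae_restrict_mem measurableSet_Ioo).mono fun x hx => ?_)
  rw [norm_mul, Real.norm_of_nonneg (Real.rpow_nonneg (sub_pos.2 hx.2).le _), Real.norm_eq_abs]
  calc (T - x) ^ (b - 1) * |f x| ≤ (T - x) ^ (b - 1) * (C * x ^ (a - 1)) :=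
        mul_le_mul_of_nonneg_left (hf x hx) (Real.rpow_nonneg (sub_pos.2 hx.2).le _)
    _ = C * (x ^ (a - 1) * (T - x) ^ (b - 1)) := by ring

theorem ContinuousOn.comp_graph {X Y Z : Type*} [TopologicalSpace X] [TopologicalSpace Y]
    [TopologicalSpace Z] {g : X → Y → Z} {s : Set X} {v : X → Y}
    (hgc : ContinuousOn (fun p : X × Y => g p.1 p.2) (s ×ˢ univ)) (hv : ContinuousOn v s) :
    ContinuousOn (fun ξ => g ξ (v ξ)) s :=
  hgc.comp (continuousOn_id.prodMk hv) fun _ hξ => ⟨hξ, mem_univ _⟩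

noncomputable def hammerstein (a b : ℝ) (K g : ℝ → ℝ → ℝ) (F v : ℝ → ℝ) (x : ℝ) : ℝ :=
  (∫ ξ in Ioo a b, K x ξ * g ξ (v ξ)) + F x

section Hammerstein

variable {a b L M : ℝ} {K g : ℝ → ℝ → ℝ} {F : ℝ → ℝ}

theorem integrableOn_kernel_mul {x : ℝ} {h : ℝ → ℝ} (hKx : ContinuousOn (K x) (Ioo a b))
    (hKM : ∀ ξ ∈ Ioo a b, |K x ξ| ≤ M) (hh : ContinuousOn h (Icc a b)) :
    IntegrableOn (fun ξ => K x ξ * h ξ) (Ioo a b) :=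
  (IntegrableOn.of_bound measure_Ioo_lt_top (hKx.aestronglyMeasurable measurableSet_Ioo) M
    (ae_restrict_of_forall_mem measurableSet_Ioo hKM)).mul_continuousOn_of_subset hh
    measurableSet_Ioo isCompact_Icc Ioo_subset_Icc_self

theorem continuousOn_hammerstein {v : ℝ → ℝ}
    (hKx : ∀ x ∈ Icc a b, ContinuousOn (K x) (Ioo a b))
    (hKξ : ∀ ξ ∈ Ioo a b, ContinuousOn (K · ξ) (Icc a b))
    (hKM : ∀ x ∈ Icc a b, ∀ ξ ∈ Ioo a b, |K x ξ| ≤ M) (hF : ContinuousOn F (Icc a b))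
    (hgc : ContinuousOn (fun p : ℝ × ℝ => g p.1 p.2) (Icc a b ×ˢ univ))
    (hv : ContinuousOn v (Icc a b)) :
    ContinuousOn (hammerstein a b K g F v) (Icc a b) := by
  have hgv := hgc.comp_graph hv
  obtain ⟨B, hB⟩ := isCompact_Icc.exists_bound_of_continuousOn hgv
  refine ContinuousOn.add ?_ hF
  refine continuousOn_of_dominated (bound := fun _ => M * B)
    (fun x hx => (integrableOn_kernel_mul (hKx x hx) (hKM x hx) hgv).aestronglyMeasurable)
    (fun x hx => ?_) (integrableOn_const measure_Ioo_lt_top.ne)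
    ((ae_restrict_mem measurableSet_Ioo).mono fun ξ hξ => (hKξ ξ hξ).mul continuousOn_const)
  filter_upwards [ae_restrict_mem measurableSet_Ioo] with ξ hξ
  rw [norm_mul, Real.norm_eq_abs]
  exact mul_le_mul (hKM x hx ξ hξ) (hB ξ (Ioo_subset_Icc_self hξ)) (norm_nonneg _)
    ((abs_nonneg _).trans (hKM x hx ξ hξ))

theorem abs_hammerstein_sub_le {v w : ℝ → ℝ} {δ x : ℝ} (hab : a ≤ b) (hL : 0 ≤ L)
    (hKx : ContinuousOn (K x) (Ioo a b)) (hKM : ∀ ξ ∈ Ioo a b, |K x ξ| ≤ M)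
    (hgc : ContinuousOn (fun p : ℝ × ℝ => g p.1 p.2) (Icc a b ×ˢ univ))
    (hg : ∀ ξ ∈ Icc a b, ∀ v₁ v₂ : ℝ, |g ξ v₁ - g ξ v₂| ≤ L * |v₁ - v₂|)
    (hv : ContinuousOn v (Icc a b)) (hw : ContinuousOn w (Icc a b))
    (hvw : ∀ ξ ∈ Icc a b, |v ξ - w ξ| ≤ δ) :
    |hammerstein a b K g F v x - hammerstein a b K g F w x| ≤ L * M * (b - a) * δ := by
  have hgv := hgc.comp_graph hv
  have hgw := hgc.comp_graph hw
  rw [hammerstein, hammerstein, add_sub_add_right_eq_sub, ← integral_sub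
    (integrableOn_kernel_mul hKx hKM hgv) (integrableOn_kernel_mul hKx hKM hgw),
    ← Real.norm_eq_abs]
  calc ‖∫ ξ in Ioo a b, K x ξ * g ξ (v ξ) - K x ξ * g ξ (w ξ)‖
      ≤ M * (L * δ) * volume.real (Ioo a b) :=
        norm_setIntegral_le_of_norm_le_const measure_Ioo_lt_top fun ξ hξ => ?_
    _ = L * M * (b - a) * δ := by rw [Real.volume_real_Ioo_of_le hab]; ring
  have hξ' := Ioo_subset_Icc_self hξ
  rw [← mul_sub, norm_mul, Real.norm_eq_abs, Real.norm_eq_abs]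
  exact mul_le_mul (hKM ξ hξ) ((hg ξ hξ' _ _).trans (mul_le_mul_of_nonneg_left (hvw ξ hξ') hL))
    (abs_nonneg _) ((abs_nonneg _).trans (hKM ξ hξ))

theorem hammerstein_congr {v w : ℝ → ℝ} (h : EqOn v w (Ioo a b)) (x : ℝ) :
    hammerstein a b K g F v x = hammerstein a b K g F w x := by
  unfold hammerstein
  congr 1
  exact setIntegral_congr_fun measurableSet_Ioo fun ξ hξ => by rw [h hξ]

theorem exists_unique_continuousOn_eq_hammerstein (hab : a ≤ b) (hL : 0 ≤ L) (hM : 0 ≤ M)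
    (hKx : ∀ x ∈ Icc a b, ContinuousOn (K x) (Ioo a b))
    (hKξ : ∀ ξ ∈ Ioo a b, ContinuousOn (K · ξ) (Icc a b))
    (hKM : ∀ x ∈ Icc a b, ∀ ξ ∈ Ioo a b, |K x ξ| ≤ M) (hF : ContinuousOn F (Icc a b))
    (hgc : ContinuousOn (fun p : ℝ × ℝ => g p.1 p.2) (Icc a b ×ˢ univ))
    (hg : ∀ ξ ∈ Icc a b, ∀ v₁ v₂ : ℝ, |g ξ v₁ - g ξ v₂| ≤ L * |v₁ - v₂|)
    (hsmall : L * M * (b - a) < 1) :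
    ∃ v : ℝ → ℝ, (ContinuousOn v (Icc a b) ∧ ∀ x ∈ Icc a b, v x = hammerstein a b K g F v x) ∧
      ∀ w : ℝ → ℝ, (ContinuousOn w (Icc a b) ∧ ∀ x ∈ Icc a b, w x = hammerstein a b K g F w x) →
        EqOn w v (Icc a b) := by
  have hq : 0 ≤ L * M * (b - a) := mul_nonneg (mul_nonneg hL hM) (sub_nonneg.2 hab)
  -- continuous functions on `[a, b]` act on `hammerstein` through their clamped extension to `ℝ`
  have hext (u : C(Icc a b, ℝ)) : ContinuousOn (IccExtend hab u) (Icc a b) :=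
    u.continuous.Icc_extend'.continuousOn
  let Φ (u : C(Icc a b, ℝ)) : C(Icc a b, ℝ) :=
    ⟨(Icc a b).domRestrict (hammerstein a b K g F (IccExtend hab u)),
      (continuousOn_hammerstein hKx hKξ hKM hF hgc (hext u)).domRestrict⟩
  have hΦ : ContractingWith (L * M * (b - a)).toNNReal Φ := by
    refine ⟨by rwa [← NNReal.coe_lt_coe, Real.coe_toNNReal _ hq],
      LipschitzWith.of_dist_le_mul fun u w => ?_⟩
    rw [Real.coe_toNNReal _ hq, ContinuousMap.dist_le (by positivity)]
    refine fun x => abs_hammerstein_sub_le hab hL (hKx x x.2) (hKM x x.2) hgc hg (hext u)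
      (hext w) fun ξ hξ => ?_
    rw [IccExtend_of_mem _ _ hξ, IccExtend_of_mem _ _ hξ, ← Real.dist_eq]
    exact ContinuousMap.dist_apply_le_dist _
  have : Nonempty C(Icc a b, ℝ) := ⟨0⟩
  set v := ContractingWith.fixedPoint Φ hΦ
  refine ⟨IccExtend hab v, ⟨hext v, fun x hx => ?_⟩, fun w ⟨hw, hw_eq⟩ => ?_⟩
  · rw [IccExtend_of_mem _ _ hx]
    exact (ContinuousMap.congr_fun hΦ.fixedPoint_isFixedPt ⟨x, hx⟩).symm
  · let w' : C(Icc a b, ℝ) := ⟨(Icc a b).domRestrict w, hw.domRestrict⟩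
    have hw' : Function.IsFixedPt Φ w' := ContinuousMap.ext fun x =>
      (hammerstein_congr (fun ξ hξ => IccExtend_of_mem _ _ (Ioo_subset_Icc_self hξ)) x).trans
        (hw_eq x x.2).symm
    intro x hx
    rw [IccExtend_of_mem _ _ hx]
    exact ContinuousMap.congr_fun (hΦ.fixedPoint_unique hw') ⟨x, hx⟩

end Hammerstein

theorem GreenG_add_right (α x t ξ s : ℝ) : GreenG α x (t + s) ξ s = GreenG α x t ξ 0 := by
  simp only [GreenG, add_sub_cancel_right, sub_zero]

theorem abs_GreenG_zero_le {α T C x ξ t : ℝ}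
    (hG : ∀ τ t : ℝ, 0 < τ → τ < t → t ≤ T → |GreenG α x t ξ τ| ≤ C * (t - τ) ^ (α / 2 - 1))
    (ht : t ∈ Ioo 0 T) : |GreenG α x t ξ 0| ≤ C * t ^ (α / 2 - 1) := by
  have h := hG ((T - t) / 2) (t + (T - t) / 2) (by linarith [ht.2]) (by linarith [ht.1])
    (by linarith [ht.2])
  rwa [GreenG_add_right, add_sub_cancel_right] at h

theorem abs_Kker_le {α T C x ξ : ℝ} (hα : α ∈ Ioo 0 1) (hT : 0 < T)
    (hG : ∀ τ t : ℝ, 0 < τ → τ < t → t ≤ T → |GreenG α x t ξ τ| ≤ C * (t - τ) ^ (α / 2 - 1)) :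
    |Kker α T x ξ| ≤ C * T ^ (-(α / 2)) * Real.Gamma (α / 2) / Real.Gamma (1 - α / 2) := by
  have hΓ : 0 < Real.Gamma (1 - α) := Real.Gamma_pos_of_pos (by linarith [hα.2])
  have h := abs_integral_rpow_sub_mul_le (a := α / 2) (b := 1 - α) (by linarith [hα.1])
    (by linarith [hα.2]) hT fun t ht => abs_GreenG_zero_le hG ht
  rw [show 1 - α - 1 = -α by ring, show α / 2 + (1 - α) - 1 = -(α / 2) by ring,
    ProbabilityTheory.beta, show α / 2 + (1 - α) = 1 - α / 2 by ring] at h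
  rw [Kker, abs_mul, abs_of_pos (one_div_pos.2 hΓ)]
  calc _ ≤ 1 / Real.Gamma (1 - α) * (C * (T ^ (-(α / 2)) *
        (Real.Gamma (α / 2) * Real.Gamma (1 - α) / Real.Gamma (1 - α / 2)))) := by gcongr
    _ = _ := by field_simp

/-- Banach fixed point for the integral equation: under the Green-function estimate,
continuity of the kernel `K` on `[0,1]×(0,1)` and of `F` on `[0,1]`, a Lipschitz
nonlinearity `g` continuous on `[0,1]×ℝ` with
`C L T^{-α/2} Γ(α/2)/Γ(1-α/2) < 1`, there is a unique continuous `v : [0,1] → ℝ`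
with `v(x) = ∫₀¹ K(x,ξ) g(ξ,v(ξ)) dξ + F(x)`. -/
theorem fixed_point_integral_equation (α T C L : ℝ) (hα : α ∈ Ioo (0 : ℝ) 1)
    (hT : 0 < T) (hC : 0 < C) (hL : 0 ≤ L)
    (hG : ∀ x ∈ Icc (0 : ℝ) 1, ∀ ξ ∈ Ioo (0 : ℝ) 1, ∀ τ t : ℝ, 0 < τ → τ < t → t ≤ T →
      |GreenG α x t ξ τ| ≤ C * (t - τ) ^ (α / 2 - 1))
    (hK : ContinuousOn (fun p : ℝ × ℝ => Kker α T p.1 p.2) (Icc 0 1 ×ˢ Ioo 0 1))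
    (F : ℝ → ℝ) (hF : ContinuousOn F (Icc 0 1))
    (g : ℝ → ℝ → ℝ)
    (hgc : ContinuousOn (fun p : ℝ × ℝ => g p.1 p.2) (Icc 0 1 ×ˢ (univ : Set ℝ)))
    (hg : ∀ ξ ∈ Icc (0 : ℝ) 1, ∀ v₁ v₂ : ℝ, |g ξ v₁ - g ξ v₂| ≤ L * |v₁ - v₂|)
    (hsmall : C * L * T ^ (-(α / 2)) * Real.Gamma (α / 2) / Real.Gamma (1 - α / 2) < 1) :
    ∃ v : ℝ → ℝ,
      (ContinuousOn v (Icc 0 1) ∧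
        ∀ x ∈ Icc (0 : ℝ) 1,
          v x = (∫ ξ in Ioo (0 : ℝ) 1, Kker α T x ξ * g ξ (v ξ)) + F x) ∧
      ∀ w : ℝ → ℝ,
        (ContinuousOn w (Icc 0 1) ∧
          ∀ x ∈ Icc (0 : ℝ) 1,
            w x = (∫ ξ in Ioo (0 : ℝ) 1, Kker α T x ξ * g ξ (w ξ)) + F x) →
        EqOn w v (Icc 0 1) := by
  have hM : 0 ≤ C * T ^ (-(α / 2)) * Real.Gamma (α / 2) / Real.Gamma (1 - α / 2) :=
    div_nonneg (mul_nonneg (mul_nonneg hC.le (Real.rpow_nonneg hT.le _))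
      (Real.Gamma_pos_of_pos (by linarith [hα.1])).le)
      (Real.Gamma_pos_of_pos (by linarith [hα.2])).le
  refine exists_unique_continuousOn_eq_hammerstein zero_le_one hL hM
    (fun x hx => hK.uncurry_left (f := Kker α T) x hx)
    (fun ξ hξ => hK.uncurry_right (f := Kker α T) ξ hξ)
    (fun x hx ξ hξ => abs_Kker_le hα hT (hG x hx ξ hξ)) hF hgc hg ?_
  convert hsmall using 1
  ring
end
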